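/- arXiv:2401.03276 — 2 statements merged into one kernel-verified Lean document; each statement's English description precedes it below -/
import Mathlib

section
/- For finitely many vectors β_j, a point x, and ρ ≥ 0 with conjugate exponents 1/p + 1/q = 1: the maximum over {Δ : ‖Δ‖_p ≤ ρ} of log(Σ_j exp(β_j·(x+Δ))) is at most log(Σ_j exp(β_j·x + ρ·‖β_j‖_q)). -/
open scoped ENNReal

lemma holder_pi (d : ℕ) (p q : ℝ≥0∞) [Fact (1 ≤ p)] [Fact (1 ≤ q)]
    (hpq : 1 / p + 1 / q = 1) (b Δ : Fin d → ℝ) :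
    ∑ i, b i * Δ i ≤ ‖(WithLp.equiv q (Fin d → ℝ)).symm b‖ *
      ‖(WithLp.equiv p (Fin d → ℝ)).symm Δ‖ := by
  have hp1 : 1 ≤ p := Fact.out
  have hq1 : 1 ≤ q := Fact.out
  simp only [one_div] at hpq
  rcases eq_or_ne q ∞ with hq | hq
  · -- q = ∞, so p = 1
    have hp : p = 1 := by
      rw [hq] at hpq; simpa using hpq
    subst hq hp
    have hsup : ∀ i, |b i| ≤ ‖(WithLp.equiv ∞ (Fin d → ℝ)).symm b‖ := by
      intro i
      rw [PiLp.norm_eq_ciSup]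
      simp only [WithLp.equiv_symm_apply, PiLp.toLp_apply, Real.norm_eq_abs]
      exact le_ciSup (f := fun j => |b j|) (Set.Finite.bddAbove (Set.finite_range _)) i
    have h1 : ‖(WithLp.equiv (1:ℝ≥0∞) (Fin d → ℝ)).symm Δ‖ = ∑ i, |Δ i| := by
      rw [PiLp.norm_eq_sum (by norm_num)]
      simp
    rw [h1, Finset.mul_sum]
    calc ∑ i, b i * Δ i ≤ ∑ i, |b i| * |Δ i| := by
          refine Finset.sum_le_sum fun i _ => ?_
          rw [← abs_mul]; exact le_abs_self _
      _ ≤ _ := Finset.sum_le_sum fun i _ =>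
          mul_le_mul_of_nonneg_right (hsup i) (abs_nonneg _)
  rcases eq_or_ne p ∞ with hp | hp
  · -- p = ∞, q = 1
    have hq' : q = 1 := by
      rw [hp] at hpq; simpa using hpq
    subst hp hq'
    have hsup : ∀ i, |Δ i| ≤ ‖(WithLp.equiv ∞ (Fin d → ℝ)).symm Δ‖ := by
      intro i
      rw [PiLp.norm_eq_ciSup]
      simp only [WithLp.equiv_symm_apply, PiLp.toLp_apply, Real.norm_eq_abs]
      exact le_ciSup (f := fun j => |Δ j|) (Set.Finite.bddAbove (Set.finite_range _)) i
    have h1 : ‖(WithLp.equiv (1:ℝ≥0∞) (Fin d → ℝ)).symm b‖ = ∑ i, |b i| := by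
      rw [PiLp.norm_eq_sum (by norm_num)]
      simp
    rw [h1, Finset.sum_mul]
    calc ∑ i, b i * Δ i ≤ ∑ i, |b i| * |Δ i| := by
          refine Finset.sum_le_sum fun i _ => ?_
          rw [← abs_mul]; exact le_abs_self _
      _ ≤ _ := Finset.sum_le_sum fun i _ =>
          mul_le_mul_of_nonneg_left (hsup i) (abs_nonneg _)
  · -- both finite
    have hp0 : p ≠ 0 := (zero_lt_one.trans_le hp1).ne'
    have hq0 : q ≠ 0 := (zero_lt_one.trans_le hq1).ne'
    have hpt : 1 ≤ p.toReal := by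
      rw [← ENNReal.toReal_one]; exact ENNReal.toReal_mono hp hp1
    have hqt : 1 ≤ q.toReal := by
      rw [← ENNReal.toReal_one]; exact ENNReal.toReal_mono hq hq1
    have hsum : p.toReal⁻¹ + q.toReal⁻¹ = 1 := by
      have := congrArg ENNReal.toReal hpq
      rwa [ENNReal.toReal_add (by simp [hp0]) (by simp [hq0]), ENNReal.toReal_inv,
        ENNReal.toReal_inv, ENNReal.toReal_one] at this
    have hplt : 1 < p.toReal := by
      rcases hpt.lt_or_eq with h | h
      · exact h
      · exfalso
        rw [← h] at hsum
        simp at hsum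
        have : q.toReal ≠ 0 := by
          simpa [ENNReal.toReal_eq_zero_iff, hq0, hq] using (by simp [ENNReal.toReal_eq_zero_iff, hq0, hq] : q.toReal ≠ 0)
        exact this (by simpa using hsum)
    have hconj : q.toReal.HolderConjugate p.toReal :=
      (Real.holderConjugate_iff.mpr ⟨hplt, hsum⟩).symm
    have := Real.inner_le_Lp_mul_Lq (s := Finset.univ) b Δ hconj
    rw [PiLp.norm_eq_sum (by positivity : 0 < q.toReal),
      PiLp.norm_eq_sum (by positivity : 0 < p.toReal)]
    simpa [Real.norm_eq_abs] using this

/-- Jensen-type upper bound for the robust-feature MNL model: for finitely many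
vectors `β j` (over a nonempty index type), a point `x`, `ρ ≥ 0`, and conjugate
exponents `1/p + 1/q = 1`, the maximum over `{Δ : ‖Δ‖_p ≤ ρ}` of
`log (Σ_j exp (β_j ⬝ (x + Δ)))` is at most `log (Σ_j exp (β_j ⬝ x + ρ ‖β_j‖_q))`. -/
theorem robust_mnl_logsumexp_upper_bound (d : ℕ) (ι : Type*) [Fintype ι] [Nonempty ι]
    (p q : ℝ≥0∞) [Fact (1 ≤ p)] [Fact (1 ≤ q)] (hpq : 1 / p + 1 / q = 1)
    (ρ : ℝ) (hρ : 0 ≤ ρ) (β : ι → Fin d → ℝ) (x : Fin d → ℝ) :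
    ∀ Δ : Fin d → ℝ, ‖(WithLp.equiv p (Fin d → ℝ)).symm Δ‖ ≤ ρ →
      Real.log (∑ j, Real.exp (∑ i, β j i * (x i + Δ i))) ≤
        Real.log (∑ j, Real.exp ((∑ i, β j i * x i) +
          ρ * ‖(WithLp.equiv q (Fin d → ℝ)).symm (β j)‖)) := by
  intro Δ hΔ
  have hpos : 0 < ∑ j, Real.exp (∑ i, β j i * (x i + Δ i)) :=
    Finset.sum_pos (fun j _ => Real.exp_pos _) Finset.univ_nonempty
  refine Real.log_le_log hpos (Finset.sum_le_sum fun j _ => ?_)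
  rw [Real.exp_le_exp]
  have hsplit : ∑ i, β j i * (x i + Δ i) = (∑ i, β j i * x i) + ∑ i, β j i * Δ i := by
    rw [← Finset.sum_add_distrib]
    exact Finset.sum_congr rfl fun i _ => by ring
  rw [hsplit]
  gcongr
  calc ∑ i, β j i * Δ i
      ≤ ‖(WithLp.equiv q (Fin d → ℝ)).symm (β j)‖ *
        ‖(WithLp.equiv p (Fin d → ℝ)).symm Δ‖ := holder_pi d p q hpq (β j) Δ
    _ ≤ ‖(WithLp.equiv q (Fin d → ℝ)).symm (β j)‖ * ρ :=
        mul_le_mul_of_nonneg_left hΔ (norm_nonneg _)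
    _ = ρ * ‖(WithLp.equiv q (Fin d → ℝ)).symm (β j)‖ := mul_comm _ _
end

section
/- For a finite nonempty index set C of size m, vectors v_j (j in C), a point x, ρ ≥ 0, and conjugate exponents 1/p+1/q=1, the gap Gap = log(Σ_j exp(v_j·x + ρ‖v_j‖_q)) - max_{‖Δ‖_p ≤ ρ} log(Σ_j exp(v_j·(x+Δ))) satisfies 0 ≤ Gap ≤ m · ρ · max_j ‖v_j‖_q. -/
open scoped ENNReal

lemma pilp_holder (d : ℕ) (p q : ℝ≥0∞) [Fact (1 ≤ p)] [Fact (1 ≤ q)]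
    (hpq : 1 / p + 1 / q = 1) (a b : Fin d → ℝ) :
    ∑ i, a i * b i ≤ ‖(WithLp.equiv q (Fin d → ℝ)).symm a‖ *
      ‖(WithLp.equiv p (Fin d → ℝ)).symm b‖ := by
  have hp1 : 1 ≤ p := Fact.out
  have hq1 : 1 ≤ q := Fact.out
  have hp0 : p ≠ 0 := fun h => by simp [h] at hp1
  have hq0 : q ≠ 0 := fun h => by simp [h] at hq1
  have habs : ∑ i, a i * b i ≤ ∑ i, |a i| * |b i| := by
    refine Finset.sum_le_sum fun i _ => ?_
    rw [← abs_mul]; exact le_abs_self _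
  by_cases hp : p = ∞
  · have hq : q = 1 := by
      rw [hp] at hpq; simpa using hpq
    subst hp hq
    have hnormb : ∀ i, |b i| ≤ ‖(WithLp.equiv ∞ (Fin d → ℝ)).symm b‖ := fun i => by
      rw [PiLp.norm_eq_ciSup]
      exact le_trans (le_of_eq (Real.norm_eq_abs _).symm)
        (le_ciSup (f := fun i => ‖((WithLp.equiv ∞ (Fin d → ℝ)).symm b) i‖)
          (Set.Finite.bddAbove (Set.finite_range _)) i)
    have hnorma : ‖(WithLp.equiv 1 (Fin d → ℝ)).symm a‖ = ∑ i, |a i| := by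
      rw [PiLp.norm_eq_sum (by norm_num)]
      simp [Real.norm_eq_abs]
    calc ∑ i, a i * b i ≤ ∑ i, |a i| * |b i| := habs
      _ ≤ ∑ i, |a i| * ‖(WithLp.equiv ∞ (Fin d → ℝ)).symm b‖ :=
          Finset.sum_le_sum fun i _ => mul_le_mul_of_nonneg_left (hnormb i) (abs_nonneg _)
      _ = _ := by rw [hnorma, Finset.sum_mul]
  · by_cases hq : q = ∞
    · have hp' : p = 1 := by
        rw [hq] at hpq; simpa using hpq
      subst hq hp'
      have hnorma : ∀ i, |a i| ≤ ‖(WithLp.equiv ∞ (Fin d → ℝ)).symm a‖ := fun i => by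
        rw [PiLp.norm_eq_ciSup]
        exact le_trans (le_of_eq (Real.norm_eq_abs _).symm)
          (le_ciSup (f := fun i => ‖((WithLp.equiv ∞ (Fin d → ℝ)).symm a) i‖)
            (Set.Finite.bddAbove (Set.finite_range _)) i)
      have hnormb : ‖(WithLp.equiv 1 (Fin d → ℝ)).symm b‖ = ∑ i, |b i| := by
        rw [PiLp.norm_eq_sum (by norm_num)]
        simp [Real.norm_eq_abs]
      calc ∑ i, a i * b i ≤ ∑ i, |a i| * |b i| := habs
        _ ≤ ∑ i, ‖(WithLp.equiv ∞ (Fin d → ℝ)).symm a‖ * |b i| :=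
            Finset.sum_le_sum fun i _ => mul_le_mul_of_nonneg_right (hnorma i) (abs_nonneg _)
        _ = _ := by rw [hnormb, Finset.mul_sum]
    · have hptop : 0 < p.toReal := ENNReal.toReal_pos hp0 hp
      have hqtop : 0 < q.toReal := ENNReal.toReal_pos hq0 hq
      have hsum : 1 / p.toReal + 1 / q.toReal = 1 := by
        have := congrArg ENNReal.toReal hpq
        rwa [ENNReal.toReal_add (by simp [ENNReal.div_eq_top, hp0])
          (by simp [ENNReal.div_eq_top, hq0]), ENNReal.toReal_div, ENNReal.toReal_div] at this
      have hq1' : 1 < q.toReal := by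
        rcases lt_or_ge 1 q.toReal with h | h
        · exact h
        · exfalso
          have h1 : 1 ≤ 1 / q.toReal := by
            rw [le_div_iff₀ hqtop, one_mul]; exact h
          have h2 : 0 < 1 / p.toReal := by positivity
          linarith
      have hconj : q.toReal.HolderConjugate p.toReal :=
        ⟨by rw [inv_one, add_comm]; simpa [one_div] using hsum, by linarith, hptop⟩
      calc ∑ i, a i * b i
          ≤ (∑ i, |a i| ^ q.toReal) ^ (1 / q.toReal) * (∑ i, |b i| ^ p.toReal) ^ (1 / p.toReal) :=
            Real.inner_le_Lp_mul_Lq Finset.univ a b hconj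
        _ = _ := by
            rw [PiLp.norm_eq_sum hqtop, PiLp.norm_eq_sum hptop]
            simp [Real.norm_eq_abs]

/-- Tightness of the Jensen-type approximation in the robust-feature MNL model:
for a finite nonempty index type `ι` of cardinality `m`, vectors `v j`, a point
`x`, `ρ ≥ 0`, and conjugate exponents `1/p + 1/q = 1`, the gap
`Gap = log (Σ_j exp (v_j ⬝ x + ρ ‖v_j‖_q)) - max_{‖Δ‖_p ≤ ρ} log (Σ_j exp (v_j ⬝ (x + Δ)))`
satisfies `0 ≤ Gap ≤ m * ρ * max_j ‖v_j‖_q`. -/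
theorem robust_mnl_jensen_gap (d : ℕ) (ι : Type*) [Fintype ι] (hι : Nonempty ι)
    (p q : ℝ≥0∞) [Fact (1 ≤ p)] [Fact (1 ≤ q)] (hpq : 1 / p + 1 / q = 1)
    (ρ : ℝ) (hρ : 0 ≤ ρ) (v : ι → Fin d → ℝ) (x : Fin d → ℝ)
    (Gap : ℝ)
    (hGap : Gap = Real.log (∑ j, Real.exp ((∑ i, v j i * x i) +
          ρ * ‖(WithLp.equiv q (Fin d → ℝ)).symm (v j)‖)) -
        sSup {y : ℝ | ∃ Δ : Fin d → ℝ, ‖(WithLp.equiv p (Fin d → ℝ)).symm Δ‖ ≤ ρ ∧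
          y = Real.log (∑ j, Real.exp (∑ i, v j i * (x i + Δ i)))}) :
    0 ≤ Gap ∧
      Gap ≤ (Fintype.card ι : ℝ) * ρ *
        Finset.univ.sup' (Finset.univ_nonempty (α := ι))
          (fun j => ‖(WithLp.equiv q (Fin d → ℝ)).symm (v j)‖) := by
  haveI := hι
  set M : ℝ := Finset.univ.sup' (Finset.univ_nonempty (α := ι))
      (fun j => ‖(WithLp.equiv q (Fin d → ℝ)).symm (v j)‖) with hM
  set A : ℝ := Real.log (∑ j, Real.exp ((∑ i, v j i * x i) +
      ρ * ‖(WithLp.equiv q (Fin d → ℝ)).symm (v j)‖)) with hA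
  set S : Set ℝ := {y : ℝ | ∃ Δ : Fin d → ℝ, ‖(WithLp.equiv p (Fin d → ℝ)).symm Δ‖ ≤ ρ ∧
      y = Real.log (∑ j, Real.exp (∑ i, v j i * (x i + Δ i)))} with hS
  have hMle : ∀ j : ι, ‖(WithLp.equiv q (Fin d → ℝ)).symm (v j)‖ ≤ M :=
    fun j => Finset.le_sup' (fun j => ‖(WithLp.equiv q (Fin d → ℝ)).symm (v j)‖) (Finset.mem_univ j)
  obtain ⟨j₀⟩ := hι
  have hM0 : 0 ≤ M := le_trans (norm_nonneg _) (hMle j₀)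
  -- key pointwise bound
  have key : ∀ Δ : Fin d → ℝ, ‖(WithLp.equiv p (Fin d → ℝ)).symm Δ‖ ≤ ρ → ∀ j : ι,
      ∑ i, v j i * Δ i ≤ ρ * ‖(WithLp.equiv q (Fin d → ℝ)).symm (v j)‖ := by
    intro Δ hΔ j
    calc ∑ i, v j i * Δ i
        ≤ ‖(WithLp.equiv q (Fin d → ℝ)).symm (v j)‖ * ‖(WithLp.equiv p (Fin d → ℝ)).symm Δ‖ :=
          pilp_holder d p q hpq (v j) Δ
      _ ≤ ‖(WithLp.equiv q (Fin d → ℝ)).symm (v j)‖ * ρ :=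
          mul_le_mul_of_nonneg_left hΔ (norm_nonneg _)
      _ = _ := mul_comm _ _
  -- every element of S is at most A
  have hSle : ∀ y ∈ S, y ≤ A := by
    rintro y ⟨Δ, hΔ, rfl⟩
    apply Real.log_le_log (Finset.sum_pos (fun j _ => Real.exp_pos _) Finset.univ_nonempty)
    refine Finset.sum_le_sum fun j _ => Real.exp_le_exp.2 ?_
    have : ∑ i, v j i * (x i + Δ i) = (∑ i, v j i * x i) + ∑ i, v j i * Δ i := by
      simp [mul_add, Finset.sum_add_distrib]
    rw [this]
    exact add_le_add_right (key Δ hΔ j) _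
  have hbdd : BddAbove S := ⟨A, hSle⟩
  set y₀ : ℝ := Real.log (∑ j, Real.exp (∑ i, v j i * x i)) with hy₀
  have hy₀S : y₀ ∈ S := ⟨0, by simpa using hρ, by simp [hy₀]⟩
  have hne : S.Nonempty := ⟨y₀, hy₀S⟩
  have hsup_le : sSup S ≤ A := csSup_le hne hSle
  have hy₀_le : y₀ ≤ sSup S := le_csSup hbdd hy₀S
  have hA_le : A ≤ y₀ + ρ * M := by
    have h1 : A ≤ Real.log (∑ j, Real.exp ((∑ i, v j i * x i) + ρ * M)) := by
      apply Real.log_le_log (Finset.sum_pos (fun j _ => Real.exp_pos _) Finset.univ_nonempty)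
      exact Finset.sum_le_sum fun j _ => Real.exp_le_exp.2
        (add_le_add_right (mul_le_mul_of_nonneg_left (hMle j) hρ) _)
    have h2 : (∑ j, Real.exp ((∑ i, v j i * x i) + ρ * M)) =
        Real.exp (ρ * M) * ∑ j, Real.exp (∑ i, v j i * x i) := by
      rw [Finset.mul_sum]
      exact Finset.sum_congr rfl fun j _ => by rw [← Real.exp_add, add_comm]
    rw [h2, Real.log_mul (Real.exp_ne_zero _)
      (ne_of_gt (Finset.sum_pos (fun j _ => Real.exp_pos _) Finset.univ_nonempty)),
      Real.log_exp] at h1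
    linarith
  constructor
  · rw [hGap]; linarith
  · rw [hGap]
    have hm : (1 : ℝ) ≤ Fintype.card ι := by
      exact_mod_cast Fintype.card_pos_iff.mpr ⟨j₀⟩
    have hρM : 0 ≤ ρ * M := mul_nonneg hρ hM0
    nlinarith [hA_le, hy₀_le]
end
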